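/- Let X have density p ∝ e^{−f} on ℝ^d with f C², and Y = X + N, N ~ N(0, σ²I) independent of X. Then ∇² log p_Y(y) = −𝔼[∇²f(X) | Y=y] + cov(∇f(X) | Y=y). -/

import Mathlib

/-!
Write `I(y) = ∫ e^{-f(x)} k(x, y) dx` for the Gaussian kernel `k`. Since `∂_y k = -∂_x k`,
differentiating under the integral and integrating by parts moves every derivative onto the
density: `∂_j I = -∫ ∂_j f e^{-f} k` and
`∂_i ∫ ∂_j f e^{-f} k = ∫ (∂_{ij} f - ∂_i f ∂_j f) e^{-f} k`.
The quotient rule applied to `∂_j log I = ∂_j I / I` then gives the formula.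

Differentiation under the integral is justified by dominating `|x - y| k(x, y)`, uniformly for
`y` near `y₀`, by finitely many Gaussian kernels with shifted centres (exponential tilting), so the
integrability hypotheses at every centre suffice.
-/

open MeasureTheory Real

noncomputable section

def sqDist {d : ℕ} (x y : Fin d → ℝ) : ℝ := ∑ i, (x i - y i) ^ 2

def gKer (d : ℕ) (σ : ℝ) (x y : Fin d → ℝ) : ℝ :=
  (2 * π * σ ^ 2) ^ (-(d : ℝ) / 2) * Real.exp (-sqDist x y / (2 * σ ^ 2))

def grad' {d : ℕ} (g : (Fin d → ℝ) → ℝ) (y : Fin d → ℝ) (i : Fin d) : ℝ :=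
  fderiv ℝ g y (Pi.single i 1)

def hess' {d : ℕ} (g : (Fin d → ℝ) → ℝ) (y : Fin d → ℝ) : Matrix (Fin d) (Fin d) ℝ :=
  Matrix.of fun i j => fderiv ℝ (fun z => fderiv ℝ g z (Pi.single j 1)) y (Pi.single i 1)

/-- Posterior expectation of `φ : ℝ^d → ℝ` given `y`, under `p(x|y) ∝ e^{−f(x)} k_σ(x,y)`. -/
def postE (d : ℕ) (σ : ℝ) (f : (Fin d → ℝ) → ℝ) (φ : (Fin d → ℝ) → ℝ)
    (y : Fin d → ℝ) : ℝ :=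
  (∫ x, φ x * (Real.exp (-f x) * gKer d σ x y)) / ∫ x, Real.exp (-f x) * gKer d σ x y

section GaussianKernel

variable {d : ℕ} {σ : ℝ}

lemma gKer_pos (hσ : σ ≠ 0) (x y : Fin d → ℝ) : 0 < gKer d σ x y := by
  have : 0 < 2 * π * σ ^ 2 := by positivity
  unfold gKer
  positivity

lemma gKer_nonneg (x y : Fin d → ℝ) : 0 ≤ gKer d σ x y := by
  unfold gKer
  positivity

lemma gKer_le (x y : Fin d → ℝ) : gKer d σ x y ≤ (2 * π * σ ^ 2) ^ (-(d : ℝ) / 2) := by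
  have hS : 0 ≤ sqDist x y := Finset.sum_nonneg fun _ _ => sq_nonneg _
  unfold gKer
  refine mul_le_of_le_one_right (by positivity) (Real.exp_le_one_iff.2 ?_)
  exact div_nonpos_of_nonpos_of_nonneg (neg_nonpos.2 hS) (by positivity)

lemma gKer_comm (x y : Fin d → ℝ) : gKer d σ x y = gKer d σ y x := by
  simp only [gKer, sqDist, sub_sq_comm (x _)]

lemma continuous_gKer_left (y : Fin d → ℝ) : Continuous fun x => gKer d σ x y := by
  unfold gKer sqDist
  fun_prop

/-- `∇_y log k(x, y) = (x - y) / σ²`, as a linear form. -/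
def logGKerFDeriv (d : ℕ) (σ : ℝ) (x y : Fin d → ℝ) : (Fin d → ℝ) →L[ℝ] ℝ :=
  (σ ^ 2)⁻¹ • ∑ i, (x i - y i) • ContinuousLinearMap.proj i

lemma logGKerFDeriv_apply (x y v : Fin d → ℝ) :
    logGKerFDeriv d σ x y v = (σ ^ 2)⁻¹ * ∑ i, (x i - y i) * v i := by
  simp [logGKerFDeriv]

lemma logGKerFDeriv_swap (x y : Fin d → ℝ) :
    logGKerFDeriv d σ y x = -logGKerFDeriv d σ x y := by
  ext v
  rw [neg_apply, logGKerFDeriv_apply, logGKerFDeriv_apply, ← mul_neg,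
    ← Finset.sum_neg_distrib]
  congr 1
  exact Finset.sum_congr rfl fun i _ => by ring

lemma continuous_logGKerFDeriv_left (y : Fin d → ℝ) :
    Continuous fun x => logGKerFDeriv d σ x y := by
  unfold logGKerFDeriv
  fun_prop

lemma norm_logGKerFDeriv_le (x y : Fin d → ℝ) :
    ‖logGKerFDeriv d σ x y‖ ≤ (σ ^ 2)⁻¹ * ∑ i, |x i - y i| := by
  refine ContinuousLinearMap.opNorm_le_bound _ (by positivity) fun v => ?_
  rw [logGKerFDeriv_apply, norm_mul, norm_inv, norm_pow, Real.norm_eq_abs, sq_abs, mul_assoc,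
    Finset.sum_mul]
  gcongr
  refine (norm_sum_le _ _).trans (Finset.sum_le_sum fun i _ => ?_)
  rw [norm_mul, Real.norm_eq_abs]
  gcongr
  exact norm_le_pi_norm v i

lemma hasFDerivAt_gKer (x y : Fin d → ℝ) :
    HasFDerivAt (gKer d σ x) (gKer d σ x y • logGKerFDeriv d σ x y) y := by
  have hS : HasFDerivAt (sqDist x)
      (∑ i, (-2 * (x i - y i)) • ContinuousLinearMap.proj i : (Fin d → ℝ) →L[ℝ] ℝ) y := by
    refine HasFDerivAt.fun_sum fun i _ => ?_
    refine (((hasFDerivAt_apply i y).const_sub (x i)).pow 2).congr_fderiv ?_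
    ext v
    simp
  have hk : gKer d σ x = fun z => (2 * π * σ ^ 2) ^ (-(d : ℝ) / 2)
      * Real.exp (-(2 * σ ^ 2)⁻¹ * sqDist x z) := by
    funext z
    simp only [gKer, div_eq_inv_mul, mul_neg, neg_mul]
  rw [hk]
  refine ((hS.const_mul _).exp.const_mul _).congr_fderiv ?_
  ext v
  simp only [mul_inv_rev, neg_mul, neg_smul, smul_neg, neg_apply, smul_apply, sum_apply,
    ContinuousLinearMap.proj_apply, smul_eq_mul, Finset.sum_neg_distrib, mul_neg, Finset.mul_sum,
    neg_neg, logGKerFDeriv_apply]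
  exact Finset.sum_congr rfl fun i _ => by ring

lemma hasFDerivAt_gKer_left (x y : Fin d → ℝ) :
    HasFDerivAt (fun x => gKer d σ x y) (-(gKer d σ x y • logGKerFDeriv d σ x y)) x := by
  have hswap : (fun x => gKer d σ x y) = gKer d σ y := funext fun x => gKer_comm x y
  have := hasFDerivAt_gKer (σ := σ) y x
  rw [gKer_comm y x, logGKerFDeriv_swap, smul_neg] at this
  rwa [hswap]

lemma exp_mul_sum_abs_le {ι : Type*} [Fintype ι] [DecidableEq ι] (c : ℝ) (u : ι → ℝ) :
    Real.exp (c * ∑ i, |u i|) ≤ ∑ s : ι → Bool, Real.exp (∑ i, (if s i then c else -c) * u i) := by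
  have hcoord : ∀ t : ℝ, Real.exp (c * |t|) ≤ ∑ b : Bool, Real.exp ((if b then c else -c) * t) := by
    intro t
    rw [Fintype.sum_bool, if_pos rfl, if_neg Bool.false_ne_true]
    rcases abs_cases t with ⟨ht, _⟩ | ⟨ht, _⟩ <;> rw [ht]
    · linarith [Real.exp_pos (-c * t)]
    · rw [mul_neg, ← neg_mul]
      linarith [Real.exp_pos (c * t)]
  calc Real.exp (c * ∑ i, |u i|) = ∏ i, Real.exp (c * |u i|) := by
        rw [Finset.mul_sum, Real.exp_sum]
    _ ≤ ∏ i, ∑ b : Bool, Real.exp ((if b then c else -c) * u i) :=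
        Finset.prod_le_prod (fun _ _ => (Real.exp_pos _).le) fun i _ => hcoord (u i)
    _ = _ := by
        rw [Fintype.prod_sum]
        simp_rw [Real.exp_sum]

lemma exp_sum_mul_gKer (hσ : σ ≠ 0) (a x y : Fin d → ℝ) :
    Real.exp (∑ i, a i * (x i - y i)) * gKer d σ x y
      = Real.exp (σ ^ 2 * (∑ i, a i ^ 2) / 2) * gKer d σ x (y + σ ^ 2 • a) := by
  simp only [gKer, sqDist, Pi.add_apply, Pi.smul_apply, smul_eq_mul]
  rw [mul_left_comm, ← Real.exp_add, mul_left_comm, ← Real.exp_add]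
  congr 2
  simp only [neg_div, Finset.sum_div, Finset.mul_sum, ← Finset.sum_neg_distrib,
    ← Finset.sum_add_distrib]
  refine Finset.sum_congr rfl fun i _ => ?_
  field_simp
  ring

lemma sum_abs_sub_le_exp {x y y₀ : Fin d → ℝ} (hy : ∀ i, |y i - y₀ i| ≤ 1) :
    ∑ i, |x i - y i| ≤ Real.exp (d + ∑ i, |x i - y₀ i|) := by
  have hcoord : ∀ i, |x i - y i| ≤ 1 + |x i - y₀ i| := fun i =>
    (abs_sub_le (x i) (y₀ i) (y i)).trans (by rw [abs_sub_comm (y₀ i)]; linarith [hy i])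
  calc ∑ i, |x i - y i| ≤ ∑ i, (1 + |x i - y₀ i|) := Finset.sum_le_sum fun i _ => hcoord i
    _ = d + ∑ i, |x i - y₀ i| := by simp [Finset.sum_add_distrib]
    _ ≤ _ := (Real.add_one_le_exp _).trans' (by linarith)

lemma gKer_le_gKer_mul_exp {x y y₀ : Fin d → ℝ} (hy : ∀ i, |y i - y₀ i| ≤ 1) :
    gKer d σ x y ≤ gKer d σ x y₀ * Real.exp ((σ ^ 2)⁻¹ * ∑ i, |x i - y₀ i|) := by
  have hcoord : ∀ i, (x i - y₀ i) ^ 2 - 2 * |x i - y₀ i| ≤ (x i - y i) ^ 2 := by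
    intro i
    have hcross : (x i - y₀ i) * (y i - y₀ i) ≤ |x i - y₀ i| := (le_abs_self _).trans
      (by rw [abs_mul]; exact mul_le_of_le_one_right (abs_nonneg _) (hy i))
    nlinarith [sq_nonneg (y i - y₀ i)]
  have hsum : sqDist x y₀ - 2 * ∑ i, |x i - y₀ i| ≤ sqDist x y := by
    rw [sqDist, sqDist, Finset.mul_sum, ← Finset.sum_sub_distrib]
    exact Finset.sum_le_sum fun i _ => hcoord i
  simp only [gKer]
  rw [mul_assoc _ (Real.exp _), ← Real.exp_add]
  gcongr
  calc -sqDist x y / (2 * σ ^ 2) ≤ -(sqDist x y₀ - 2 * ∑ i, |x i - y₀ i|) / (2 * σ ^ 2) := by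
        gcongr
    _ = _ := by ring

/-- A multiple of the sum of the kernels centred at `y₀ ± σ² c` (one sign per coordinate),
`c = 1 + σ⁻²`; it dominates `|x - y| k(x, y)` uniformly for `y` near `y₀`. -/
def gKerDom (d : ℕ) (σ : ℝ) (y₀ x : Fin d → ℝ) : ℝ :=
  Real.exp (d + σ ^ 2 * (d * (1 + (σ ^ 2)⁻¹) ^ 2) / 2) * ∑ s : Fin d → Bool,
    gKer d σ x (y₀ + σ ^ 2 • fun i => if s i then 1 + (σ ^ 2)⁻¹ else -(1 + (σ ^ 2)⁻¹))

lemma sum_abs_sub_mul_gKer_le (hσ : σ ≠ 0) {x y y₀ : Fin d → ℝ} (hy : ∀ i, |y i - y₀ i| ≤ 1) :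
    (∑ i, |x i - y i|) * gKer d σ x y ≤ gKerDom d σ y₀ x := by
  set c := 1 + (σ ^ 2)⁻¹
  set A := ∑ i, |x i - y₀ i|
  have hsq : ∀ s : Fin d → Bool, ∑ i, (if s i then c else -c) ^ 2 = d * c ^ 2 := fun s => by
    simp [apply_ite (· ^ 2 : ℝ → ℝ)]
  calc (∑ i, |x i - y i|) * gKer d σ x y
      ≤ Real.exp (d + A) * (gKer d σ x y₀ * Real.exp ((σ ^ 2)⁻¹ * A)) :=
        mul_le_mul (sum_abs_sub_le_exp hy) (gKer_le_gKer_mul_exp hy) (gKer_pos hσ x y).le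
          (Real.exp_pos _).le
    _ = Real.exp d * (Real.exp (c * A) * gKer d σ x y₀) := by
        rw [show c * A = A + (σ ^ 2)⁻¹ * A by ring, Real.exp_add, Real.exp_add]
        ring
    _ ≤ Real.exp d * ∑ s : Fin d → Bool,
          Real.exp (∑ i, (if s i then c else -c) * (x i - y₀ i)) * gKer d σ x y₀ := by
        rw [← Finset.sum_mul]
        gcongr
        · exact (gKer_pos hσ x y₀).le
        · exact exp_mul_sum_abs_le c _
    _ = _ := by
        rw [gKerDom, Finset.mul_sum, Finset.mul_sum]
        refine Finset.sum_congr rfl fun s _ => ?_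
        rw [exp_sum_mul_gKer hσ (fun i => if s i then c else -c), hsq, Real.exp_add]
        ring

lemma integrable_abs_mul_gKerDom (hσ : σ ≠ 0) {ψ : (Fin d → ℝ) → ℝ}
    (hint : ∀ z, Integrable fun x => ψ x * gKer d σ x z) (y₀ : Fin d → ℝ) :
    Integrable fun x => |ψ x| * gKerDom d σ y₀ x := by
  have habs : ∀ z, Integrable fun x => |ψ x| * gKer d σ x z := fun z =>
    (hint z).abs.congr (.of_forall fun x => by simp only [abs_mul, abs_of_pos (gKer_pos hσ x z)])
  simp_rw [gKerDom, Finset.mul_sum, mul_left_comm |ψ _|]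
  exact integrable_finsetSum _ fun s _ => (habs _).const_mul _

/-- `p_Y = gSmooth d σ p` for the density `p` of `X`. -/
def gSmooth (d : ℕ) (σ : ℝ) (ψ : (Fin d → ℝ) → ℝ) (y : Fin d → ℝ) : ℝ :=
  ∫ x, ψ x * gKer d σ x y

lemma integrable_mul_gKer {ψ : (Fin d → ℝ) → ℝ} (hψ : Integrable ψ) (y : Fin d → ℝ) :
    Integrable fun x => ψ x * gKer d σ x y :=
  hψ.mul_bdd (continuous_gKer_left y).aestronglyMeasurable
    (.of_forall fun x => (Real.norm_of_nonneg (gKer_nonneg x y)).trans_le (gKer_le x y))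

lemma gSmooth_pos (hσ : σ ≠ 0) {ψ : (Fin d → ℝ) → ℝ} (hψ : ∀ x, 0 < ψ x) {y : Fin d → ℝ}
    (hint : Integrable fun x => ψ x * gKer d σ x y) : 0 < gSmooth d σ ψ y := by
  have hpos : ∀ x, 0 < ψ x * gKer d σ x y := fun x => mul_pos (hψ x) (gKer_pos hσ x y)
  rw [gSmooth, integral_pos_iff_support_of_nonneg (fun x => (hpos x).le) hint,
    Function.support_eq_univ fun x => (hpos x).ne']
  simpa using NeZero.ne volume

lemma norm_smul_logGKerFDeriv_le (hσ : σ ≠ 0) {x y y₀ : Fin d → ℝ} (hy : ∀ i, |y i - y₀ i| ≤ 1)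
    (r : ℝ) :
    ‖(r * gKer d σ x y) • logGKerFDeriv d σ x y‖ ≤ (σ ^ 2)⁻¹ * (|r| * gKerDom d σ y₀ x) := by
  rw [norm_smul, norm_mul, Real.norm_eq_abs, Real.norm_eq_abs, abs_of_pos (gKer_pos hσ x y)]
  calc |r| * gKer d σ x y * ‖logGKerFDeriv d σ x y‖
      ≤ |r| * gKer d σ x y * ((σ ^ 2)⁻¹ * ∑ i, |x i - y i|) :=
        mul_le_mul_of_nonneg_left (norm_logGKerFDeriv_le x y)
          (mul_nonneg (abs_nonneg r) (gKer_pos hσ x y).le)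
    _ = (σ ^ 2)⁻¹ * |r| * ((∑ i, |x i - y i|) * gKer d σ x y) := by ring
    _ ≤ (σ ^ 2)⁻¹ * |r| * gKerDom d σ y₀ x :=
        mul_le_mul_of_nonneg_left (sum_abs_sub_mul_gKer_le hσ hy) (by positivity)
    _ = _ := by ring

lemma hasFDerivAt_gSmooth (hσ : σ ≠ 0) {ψ : (Fin d → ℝ) → ℝ}
    (hint : ∀ z, Integrable fun x => ψ x * gKer d σ x z) (y₀ : Fin d → ℝ) :
    Integrable (fun x => (ψ x * gKer d σ x y₀) • logGKerFDeriv d σ x y₀) ∧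
      HasFDerivAt (gSmooth d σ ψ)
        (∫ x, (ψ x * gKer d σ x y₀) • logGKerFDeriv d σ x y₀) y₀ := by
  have hbound : ∀ y ∈ Metric.ball y₀ 1, ∀ x,
      ‖(ψ x * gKer d σ x y) • logGKerFDeriv d σ x y‖ ≤ (σ ^ 2)⁻¹ * (|ψ x| * gKerDom d σ y₀ x) :=
    fun y hy x => norm_smul_logGKerFDeriv_le hσ
      (fun i => (Real.dist_eq _ _ ▸ dist_le_pi_dist y y₀ i).trans (Metric.mem_ball.1 hy).le) _
  have hbound_int : Integrable fun x => (σ ^ 2)⁻¹ * (|ψ x| * gKerDom d σ y₀ x) :=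
    (integrable_abs_mul_gKerDom hσ hint y₀).const_mul _
  have hmeas : AEStronglyMeasurable fun x => (ψ x * gKer d σ x y₀) • logGKerFDeriv d σ x y₀ :=
    (hint y₀).aestronglyMeasurable.smul (continuous_logGKerFDeriv_left y₀).aestronglyMeasurable
  refine ⟨hbound_int.mono' hmeas (.of_forall (hbound y₀ (Metric.mem_ball_self one_pos))), ?_⟩
  refine hasFDerivAt_integral_of_dominated_of_fderiv_le (Metric.ball_mem_nhds y₀ one_pos)
    (.of_forall fun y => (hint y).aestronglyMeasurable) (hint y₀) hmeas
    (.of_forall fun x y hy => hbound y hy x) hbound_int (.of_forall fun x y _ => ?_)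
  exact ((hasFDerivAt_gKer x y).const_mul (ψ x)).congr_fderiv (smul_smul _ _ _)

-- Gaussian integration by parts, using `∂_y k = -∂_x k`.
lemma fderiv_gSmooth (hσ : σ ≠ 0) {ψ : (Fin d → ℝ) → ℝ} (hψ : Differentiable ℝ ψ)
    (hint : ∀ z, Integrable fun x => ψ x * gKer d σ x z) {y v : Fin d → ℝ}
    (hint' : Integrable fun x => fderiv ℝ ψ x v * gKer d σ x y) :
    fderiv ℝ (gSmooth d σ ψ) y v = gSmooth d σ (fun x => fderiv ℝ ψ x v) y := by
  obtain ⟨hF', hderiv⟩ := hasFDerivAt_gSmooth hσ hint y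
  have hk : ∀ x, fderiv ℝ (fun x => gKer d σ x y) x v
      = -(gKer d σ x y * logGKerFDeriv d σ x y v) := fun x => by
    simp [(hasFDerivAt_gKer_left x y).fderiv]
  have hibp := integral_mul_fderiv_eq_neg_fderiv_mul_of_integrable hint' ?_ (hint y)
    (fun x _ => hψ x) (fun x _ => (hasFDerivAt_gKer_left x y).differentiableAt)
  · rw [hderiv.fderiv, ContinuousLinearMap.integral_apply hF', gSmooth, ← neg_neg (∫ x, _ * _),
      ← hibp, ← integral_neg]
    simp [hk, mul_assoc]
  · simpa [hk, mul_assoc] using (hF'.apply_continuousLinearMap v).neg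

lemma differentiable_gSmooth (hσ : σ ≠ 0) {ψ : (Fin d → ℝ) → ℝ}
    (hint : ∀ z, Integrable fun x => ψ x * gKer d σ x z) : Differentiable ℝ (gSmooth d σ ψ) :=
  fun y => (hasFDerivAt_gSmooth hσ hint y).2.differentiableAt

lemma fderiv_log_gSmooth (hσ : σ ≠ 0) {ψ : (Fin d → ℝ) → ℝ} (hψ : ∀ x, 0 < ψ x)
    (hint : ∀ z, Integrable fun x => ψ x * gKer d σ x z) (y v : Fin d → ℝ) :
    fderiv ℝ (fun z => Real.log (gSmooth d σ ψ z)) y v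
      = fderiv ℝ (gSmooth d σ ψ) y v / gSmooth d σ ψ y := by
  rw [fderiv.log (differentiable_gSmooth hσ hint y) (gSmooth_pos hσ hψ (hint y)).ne']
  simp [div_eq_inv_mul]

end GaussianKernel

lemma fderiv_div_apply {E : Type*} [NormedAddCommGroup E] [NormedSpace ℝ E] {a b : E → ℝ} {y : E}
    (ha : DifferentiableAt ℝ a y) (hb : DifferentiableAt ℝ b y) (hy : b y ≠ 0) (v : E) :
    fderiv ℝ (fun z => a z / b z) y v
      = (fderiv ℝ a y v * b y - a y * fderiv ℝ b y v) / b y ^ 2 := by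
  have h : HasFDerivAt (fun z => a z * (b z)⁻¹) _ y :=
    ha.hasFDerivAt.mul ((hasDerivAt_inv hy).comp_hasFDerivAt y hb.hasFDerivAt)
  simp only [div_eq_mul_inv]
  rw [h.fderiv]
  simp only [neg_smul, smul_neg, add_apply, neg_apply, smul_apply, smul_eq_mul]
  field_simp
  ring

section Potential

variable {d : ℕ} {σ : ℝ} {f : (Fin d → ℝ) → ℝ}

lemma differentiable_exp_neg (hf : Differentiable ℝ f) :
    Differentiable ℝ fun x => Real.exp (-f x) :=
  fun x => (hf x).neg.exp

lemma fderiv_exp_neg_apply (hf : Differentiable ℝ f) (x v : Fin d → ℝ) :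
    fderiv ℝ (fun x => Real.exp (-f x)) x v = -(fderiv ℝ f x v * Real.exp (-f x)) := by
  have h : HasFDerivAt (fun x => Real.exp (-f x)) _ x := (hf x).hasFDerivAt.neg.exp
  rw [h.fderiv]
  simp [mul_comm]

lemma differentiable_grad' (hf : ContDiff ℝ 2 f) (j : Fin d) :
    Differentiable ℝ fun x => grad' f x j :=
  ((hf.fderiv_right (by norm_num)).differentiable one_ne_zero).clm_apply
    (differentiable_const _)

lemma fderiv_grad'_mul_exp_neg (hf : ContDiff ℝ 2 f) (i j : Fin d) (x : Fin d → ℝ) :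
    fderiv ℝ (fun x => grad' f x j * Real.exp (-f x)) x (Pi.single i 1)
      = (hess' f x i j - grad' f x i * grad' f x j) * Real.exp (-f x) := by
  rw [fderiv_fun_mul (differentiable_grad' hf j x)
    (differentiable_exp_neg (hf.differentiable two_ne_zero) x)]
  simp only [grad', hess', Matrix.of_apply, add_apply, smul_apply, smul_eq_mul, mul_neg,
    fderiv_exp_neg_apply (hf.differentiable two_ne_zero)]
  ring

lemma fderiv_gSmooth_exp_neg (hσ : σ ≠ 0) (hf : Differentiable ℝ f)
    (hfi : Integrable fun x => Real.exp (-f x)) {y : Fin d → ℝ} {j : Fin d}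
    (hint : Integrable fun x => grad' f x j * Real.exp (-f x) * gKer d σ x y) :
    fderiv ℝ (gSmooth d σ fun x => Real.exp (-f x)) y (Pi.single j 1)
      = -gSmooth d σ (fun x => grad' f x j * Real.exp (-f x)) y := by
  rw [fderiv_gSmooth hσ (differentiable_exp_neg hf) (integrable_mul_gKer hfi) ?_]
  · simp only [gSmooth, fderiv_exp_neg_apply hf, neg_mul, integral_neg]
    rfl
  · simp only [fderiv_exp_neg_apply hf, neg_mul]
    exact hint.neg

lemma fderiv_gSmooth_grad'_mul_exp_neg (hσ : σ ≠ 0) (hf : ContDiff ℝ 2 f) {y : Fin d → ℝ}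
    {i j : Fin d} (hint : ∀ z, Integrable fun x => grad' f x j * Real.exp (-f x) * gKer d σ x z)
    (hgg : Integrable fun x => grad' f x i * grad' f x j * Real.exp (-f x) * gKer d σ x y)
    (hhess : Integrable fun x => hess' f x i j * Real.exp (-f x) * gKer d σ x y) :
    fderiv ℝ (gSmooth d σ fun x => grad' f x j * Real.exp (-f x)) y (Pi.single i 1)
      = gSmooth d σ (fun x => hess' f x i j * Real.exp (-f x)) y
        - gSmooth d σ (fun x => grad' f x i * grad' f x j * Real.exp (-f x)) y := by
  have hρ := differentiable_exp_neg (hf.differentiable two_ne_zero)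
  rw [fderiv_gSmooth hσ ((differentiable_grad' hf j).fun_mul hρ) hint ?_]
  · simp only [gSmooth, fderiv_grad'_mul_exp_neg hf, sub_mul]
    exact integral_sub hhess hgg
  · simp only [fderiv_grad'_mul_exp_neg hf, sub_mul]
    exact hhess.sub hgg

lemma postE_eq_div_gSmooth (φ : (Fin d → ℝ) → ℝ) (y : Fin d → ℝ) :
    postE d σ f φ y
      = gSmooth d σ (fun x => φ x * Real.exp (-f x)) y
        / gSmooth d σ (fun x => Real.exp (-f x)) y := by
  simp only [postE, gSmooth, mul_assoc]

end Potential

/-- If `X ~ e^{−f}/Z` with `f` C² and `Y = X + N`, `N ~ N(0, σ²I)`, then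
`∇² log p_Y(y) = −𝔼[∇²f(X) | Y=y] + cov(∇f(X) | Y=y)`. -/
theorem stmt4 (d : ℕ) (σ : ℝ) (hσ : 0 < σ) (f : (Fin d → ℝ) → ℝ)
    (hf : ContDiff ℝ 2 f) (hfi : Integrable fun x => Real.exp (-f x))
    (hint1 : ∀ y i, Integrable fun x => grad' f x i * (Real.exp (-f x) * gKer d σ x y))
    (hint2 : ∀ y i j,
      Integrable fun x => grad' f x i * grad' f x j * (Real.exp (-f x) * gKer d σ x y))
    (hint3 : ∀ y i j,
      Integrable fun x => hess' f x i j * (Real.exp (-f x) * gKer d σ x y)) :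
    ∀ y : Fin d → ℝ,
      hess' (fun z => Real.log (∫ x, Real.exp (-f x) * gKer d σ x z)) y
        = Matrix.of (fun i j => -postE d σ f (fun x => hess' f x i j) y
            + (postE d σ f (fun x => grad' f x i * grad' f x j) y
               - postE d σ f (fun x => grad' f x i) y
                  * postE d σ f (fun x => grad' f x j) y)) := by
  intro y
  ext i j
  have hσ0 : σ ≠ 0 := hσ.ne'
  have hdf : Differentiable ℝ f := hf.differentiable two_ne_zero
  have hρint := integrable_mul_gKer (σ := σ) hfi
  have hgint : ∀ j z, Integrable fun x => grad' f x j * Real.exp (-f x) * gKer d σ x z :=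
    fun j z => by simpa only [mul_assoc] using hint1 z j
  have hlog : (fun z => fderiv ℝ
        (fun w => Real.log (gSmooth d σ (fun x => Real.exp (-f x)) w)) z (Pi.single j 1))
      = fun z => -gSmooth d σ (fun x => grad' f x j * Real.exp (-f x)) z
          / gSmooth d σ (fun x => Real.exp (-f x)) z := funext fun z => by
    rw [fderiv_log_gSmooth hσ0 (fun x => Real.exp_pos _) hρint,
      fderiv_gSmooth_exp_neg hσ0 hdf hfi (hgint j z)]
  change fderiv ℝ (fun z => fderiv ℝ
      (fun w => Real.log (gSmooth d σ (fun x => Real.exp (-f x)) w)) z (Pi.single j 1)) y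
      (Pi.single i 1) = _
  rw [hlog, fderiv_div_apply (a := fun z => -gSmooth d σ _ z)
      (differentiable_gSmooth hσ0 (hgint j) y).neg (differentiable_gSmooth hσ0 hρint y)
      (gSmooth_pos hσ0 (fun x => Real.exp_pos _) (hρint y)).ne',
    fderiv_fun_neg, neg_apply, fderiv_gSmooth_exp_neg hσ0 hdf hfi (hgint i y),
    fderiv_gSmooth_grad'_mul_exp_neg hσ0 hf (hgint j)
      (by simpa only [mul_assoc] using hint2 y i j) (by simpa only [mul_assoc] using hint3 y i j)]
  simp only [Matrix.of_apply, postE_eq_div_gSmooth]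
  field_simp
  ring

end
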